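/- The two-dimensional subalgebras of A1 are exactly the subspaces ⟨e2, e3⟩, ⟨e1, e2⟩, and ⟨e1, αe2 + e3⟩ for α ∈ ℂ. -/
import Mathlib

set_option linter.unreachableTactic false
set_option linter.unnecessarySeqFocus false
set_option linter.unusedTactic false

noncomputable section

/-- The underlying space of our 3-dimensional algebras. -/
abbrev V3 : Type := Fin 3 → ℂ
/-- Multiplication of the algebra `A1` (and of `S1`): in the basis `e1 = ![1,0,0]`,
`e2 = ![0,1,0]`, `e3 = ![0,0,1]`, the element `e1` is the unit and all
products among `e2, e3` vanish. -/
def A1mul : V3 →ₗ[ℂ] V3 →ₗ[ℂ] V3 :=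
  LinearMap.mk₂ ℂ (fun x y => ![x 0 * y 0, x 0 * y 1 + x 1 * y 0, x 0 * y 2 + x 2 * y 0])
    (fun x x' y => by funext k; fin_cases k <;> simp <;> ring)
    (fun a x y => by funext k; fin_cases k <;> simp <;> ring)
    (fun x y y' => by funext k; fin_cases k <;> simp <;> ring)
    (fun a x y => by funext k; fin_cases k <;> simp <;> ring)
/-- The basis vector `e1` (the unit). -/
def e1 : V3 := ![1, 0, 0]
/-- The basis vector `e2`. -/
def e2 : V3 := ![0, 1, 0]
/-- The basis vector `e3`. -/
def e3 : V3 := ![0, 0, 1]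

lemma A1mul_apply' (x y : V3) :
    A1mul x y = ![x 0 * y 0, x 0 * y 1 + x 1 * y 0, x 0 * y 2 + x 2 * y 0] := rfl

lemma A1mul_e1_left (y : V3) : A1mul e1 y = y := by
  funext k; fin_cases k <;> simp [A1mul_apply', e1]

lemma A1mul_e1_right (y : V3) : A1mul y e1 = y := by
  funext k; fin_cases k <;> simp [A1mul_apply', e1]

lemma A1mul_zero0 (x y : V3) (hx : x 0 = 0) (hy : y 0 = 0) : A1mul x y = 0 := by
  funext k; fin_cases k <;> simp [A1mul_apply', hx, hy]

lemma finrank_span_pair' (u v : V3) (h : LinearIndependent ℂ ![u, v]) :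
    Module.finrank ℂ (Submodule.span ℂ ({u, v} : Set V3)) = 2 := by
  have hr : ({u, v} : Set V3) = Set.range ![u, v] := by
    simp [Matrix.range_cons, Matrix.range_empty, Set.pair_comm]
  rw [hr, finrank_span_eq_card h]
  simp

lemma closure_span_pair (u v : V3)
    (huu : A1mul u u ∈ Submodule.span ℂ ({u, v} : Set V3))
    (huv : A1mul u v ∈ Submodule.span ℂ ({u, v} : Set V3))
    (hvu : A1mul v u ∈ Submodule.span ℂ ({u, v} : Set V3))
    (hvv : A1mul v v ∈ Submodule.span ℂ ({u, v} : Set V3)) :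
    ∀ x ∈ Submodule.span ℂ ({u, v} : Set V3), ∀ y ∈ Submodule.span ℂ ({u, v} : Set V3),
      A1mul x y ∈ Submodule.span ℂ ({u, v} : Set V3) := by
  intro x hx y hy
  rw [Submodule.mem_span_pair] at hx hy
  obtain ⟨a, b, rfl⟩ := hx
  obtain ⟨c, d, rfl⟩ := hy
  simp only [map_add, map_smul, LinearMap.add_apply, LinearMap.smul_apply, smul_add, smul_smul]
  refine add_mem (add_mem ?_ ?_) (add_mem ?_ ?_) <;>
    exact Submodule.smul_mem _ _ (by assumption)

lemma li_e2_e3 : LinearIndependent ℂ ![e2, e3] := by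
  rw [LinearIndependent.pair_iff]
  intro s t h
  exact ⟨by simpa [e2, e3] using congrFun h 1, by simpa [e2, e3] using congrFun h 2⟩

lemma li_e1_e2 : LinearIndependent ℂ ![e1, e2] := by
  rw [LinearIndependent.pair_iff]
  intro s t h
  exact ⟨by simpa [e1, e2] using congrFun h 0, by simpa [e1, e2] using congrFun h 1⟩

lemma li_e1_w (α : ℂ) : LinearIndependent ℂ ![e1, α • e2 + e3] := by
  rw [LinearIndependent.pair_iff]
  intro s t h
  exact ⟨by simpa [e1, e2, e3] using congrFun h 0, by simpa [e1, e2, e3] using congrFun h 2⟩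

/-- **Theorem.** The two-dimensional subalgebras of `A1` are exactly
`⟨e2, e3⟩`, `⟨e1, e2⟩` and `⟨e1, α e2 + e3⟩` for `α ∈ ℂ`. -/
theorem two_dim_subalgebras_of_A1 (W : Submodule ℂ V3) :
    ((∀ x ∈ W, ∀ y ∈ W, A1mul x y ∈ W) ∧ Module.finrank ℂ W = 2) ↔
      (W = Submodule.span ℂ {e2, e3} ∨ W = Submodule.span ℂ {e1, e2} ∨
        ∃ α : ℂ, W = Submodule.span ℂ {e1, α • e2 + e3}) := by
  constructor
  · rintro ⟨hmul, hdim⟩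
    by_cases hx0 : ∀ x ∈ W, x 0 = 0
    · -- W ⊆ ⟨e2, e3⟩
      left
      have hle : W ≤ Submodule.span ℂ ({e2, e3} : Set V3) := by
        intro x hx
        rw [Submodule.mem_span_pair]
        refine ⟨x 1, x 2, ?_⟩
        funext k; fin_cases k <;> simp [e2, e3]
        exact (hx0 x hx).symm
      exact Submodule.eq_of_le_of_finrank_eq hle (by rw [hdim, finrank_span_pair' _ _ li_e2_e3])
    · push_neg at hx0
      obtain ⟨x, hxW, hx0⟩ := hx0
      have he1 : e1 ∈ W := by
        have key : (2 * x 0) • x - A1mul x x = (x 0 * x 0) • e1 := by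
          funext k
          fin_cases k <;>
            simp [A1mul_apply', e1, Matrix.vecHead, Matrix.vecTail, Function.comp] <;> ring
        have hmem : ((2 * x 0) • x - A1mul x x) ∈ W :=
          W.sub_mem (W.smul_mem _ hxW) (hmul x hxW x hxW)
        rw [key] at hmem
        have := W.smul_mem (x 0 * x 0)⁻¹ hmem
        rwa [smul_smul, inv_mul_cancel₀ (mul_ne_zero hx0 hx0), one_smul] at this
      -- find v ∈ W not a multiple of e1
      have he1ne : e1 ≠ 0 := by
        intro h; simpa [e1] using congrFun h 0
      have hnle : ¬ W ≤ Submodule.span ℂ ({e1} : Set V3) := by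
        intro hle
        have := Submodule.finrank_mono hle
        rw [hdim, finrank_span_singleton he1ne] at this
        omega
      obtain ⟨v, hvW, hv⟩ := SetLike.not_le_iff_exists.mp hnle
      set w : V3 := v - v 0 • e1 with hw
      have hwW : w ∈ W := W.sub_mem hvW (W.smul_mem _ he1)
      have hw0 : w 0 = 0 := by simp [hw, e1, Matrix.vecHead]
      have hwne : w 1 ≠ 0 ∨ w 2 ≠ 0 := by
        by_contra hc
        push_neg at hc
        apply hv
        rw [Submodule.mem_span_singleton]
        refine ⟨v 0, ?_⟩
        have hwz : w = 0 := by
          funext k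
          fin_cases k
          · exact hw0
          · exact hc.1
          · exact hc.2
        exact (sub_eq_zero.mp hwz).symm
      by_cases hw2 : w 2 = 0
      · -- then w 1 ≠ 0 and W = ⟨e1, e2⟩
        right; left
        have hw1 : w 1 ≠ 0 := by tauto
        have he2 : e2 ∈ W := by
          have hmem : (w 1)⁻¹ • w ∈ W := W.smul_mem _ hwW
          have heq : (w 1)⁻¹ • w = e2 := by
            funext k
            fin_cases k
            · simp [e2, hw0]
            · simpa [e2] using inv_mul_cancel₀ hw1
            · simp [e2, hw2]
          rwa [heq] at hmem
        have hle : Submodule.span ℂ ({e1, e2} : Set V3) ≤ W := by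
          rw [Submodule.span_le]
          rintro y (rfl | rfl) <;> assumption
        exact (Submodule.eq_of_le_of_finrank_eq hle
          (by rw [hdim, finrank_span_pair' _ _ li_e1_e2])).symm
      · right; right
        refine ⟨w 1 / w 2, ?_⟩
        have hgen : (w 1 / w 2) • e2 + e3 ∈ W := by
          have hmem : (w 2)⁻¹ • w ∈ W := W.smul_mem _ hwW
          have heq : (w 2)⁻¹ • w = (w 1 / w 2) • e2 + e3 := by
            funext k
            fin_cases k
            · simp [e2, e3, hw0]
            · simp [e2, e3]; rw [div_eq_mul_inv]; ring
            · simpa [e2, e3] using inv_mul_cancel₀ hw2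
          rwa [heq] at hmem
        have hle : Submodule.span ℂ ({e1, (w 1 / w 2) • e2 + e3} : Set V3) ≤ W := by
          rw [Submodule.span_le]
          rintro y (rfl | rfl) <;> assumption
        exact (Submodule.eq_of_le_of_finrank_eq hle
          (by rw [hdim, finrank_span_pair' _ _ (li_e1_w _)])).symm
  · rintro (rfl | rfl | ⟨α, rfl⟩)
    · refine ⟨?_, finrank_span_pair' _ _ li_e2_e3⟩
      apply closure_span_pair <;>
        · rw [A1mul_zero0] <;> first
            | exact Submodule.zero_mem _
            | simp [e2, e3]
    · refine ⟨?_, finrank_span_pair' _ _ li_e1_e2⟩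
      have h1 : e1 ∈ Submodule.span ℂ ({e1, e2} : Set V3) := Submodule.subset_span (by simp)
      have h2 : e2 ∈ Submodule.span ℂ ({e1, e2} : Set V3) := Submodule.subset_span (by simp)
      apply closure_span_pair
      · rwa [A1mul_e1_left]
      · rwa [A1mul_e1_left]
      · rwa [A1mul_e1_right]
      · rw [A1mul_zero0 _ _ (by simp [e2]) (by simp [e2])]
        exact Submodule.zero_mem _
    · refine ⟨?_, finrank_span_pair' _ _ (li_e1_w α)⟩
      have h1 : e1 ∈ Submodule.span ℂ ({e1, α • e2 + e3} : Set V3) :=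
        Submodule.subset_span (by simp)
      have h2 : α • e2 + e3 ∈ Submodule.span ℂ ({e1, α • e2 + e3} : Set V3) :=
        Submodule.subset_span (by simp)
      apply closure_span_pair
      · rwa [A1mul_e1_left]
      · rwa [A1mul_e1_left]
      · rwa [A1mul_e1_right]
      · rw [A1mul_zero0 _ _ (by simp [e2, e3]) (by simp [e2, e3])]
        exact Submodule.zero_mem _
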